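/- arXiv:1303.6042 — 2 statements merged into one kernel-verified Lean document; each statement's English description precedes it below -/
import Mathlib

section
/- The pick-freeze identity holds: Cov(Y, Y') = Var(E(Y | X)), where Y = η(X,Z) and Y' = η(X,Z'). -/
open MeasureTheory ProbabilityTheory Filter
open scoped ENNReal NNReal Topology

/-!
Write `ν` and `κ` for the laws of `X` and `Z`, and `m x = ∫ η (x, z) dκ(z)`. By independence
the law of `(X, Z, Z')` is `ν ⊗ κ ⊗ κ`, so freezing `X` shows `E[Y | X] = m X`, and Fubini
gives `E[Y] = E[Y'] = ∫ m dν` and, since `Y` and `Y'` are independent given `X`,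
`E[Y Y'] = ∫ m² dν`. Both sides therefore equal `∫ m² dν - (∫ m dν)²`.
-/

section Product

variable {α β : Type*} [MeasurableSpace α] [MeasurableSpace β]
  {ν : Measure α} {κ : Measure β} [IsProbabilityMeasure κ] {η : α × β → ℝ}

lemma memLp_two_integral_prod_left [IsFiniteMeasure ν] (hη : MemLp η 2 (ν.prod κ)) :
    MemLp (fun x => ∫ z, η (x, z) ∂κ) 2 ν := by
  have hm : AEStronglyMeasurable (fun x => ∫ z, η (x, z) ∂κ) ν :=
    hη.aestronglyMeasurable.integral_prod_right'
  have jensen : ∀ᵐ x ∂ν, (∫ z, η (x, z) ∂κ) ^ 2 ≤ ∫ z, η (x, z) ^ 2 ∂κ := by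
    filter_upwards [(hη.integrable one_le_two).prod_right_ae, hη.integrable_sq.prod_right_ae]
      with x hint hint_sq
    exact (Even.convexOn_pow even_two).map_integral_le (continuous_pow 2).continuousOn
      isClosed_univ (.of_forall fun _ => Set.mem_univ _) hint hint_sq
  refine (memLp_two_iff_integrable_sq hm).2
    (hη.integrable_sq.integral_prod_left.mono' (hm.pow 2) ?_)
  filter_upwards [jensen] with x hx
  rwa [Real.norm_eq_abs, abs_of_nonneg (sq_nonneg _)]

lemma integral_prod_prod_mul_eq_integral_sq [SigmaFinite ν] (hη : MemLp η 2 (ν.prod κ)) :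
    ∫ p, η (p.1, p.2.1) * η (p.1, p.2.2) ∂ν.prod (κ.prod κ)
      = ∫ x, (∫ z, η (x, z) ∂κ) ^ 2 ∂ν := by
  have hπ₁ : MeasurePreserving (fun p : α × β × β => (p.1, p.2.1))
      (ν.prod (κ.prod κ)) (ν.prod κ) :=
    (MeasurePreserving.id ν).prod ⟨measurable_fst, by simp⟩
  have hπ₂ : MeasurePreserving (fun p : α × β × β => (p.1, p.2.2))
      (ν.prod (κ.prod κ)) (ν.prod κ) :=
    (MeasurePreserving.id ν).prod ⟨measurable_snd, by simp⟩
  have hint : Integrable (fun p : α × β × β => η (p.1, p.2.1) * η (p.1, p.2.2))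
      (ν.prod (κ.prod κ)) :=
    (hη.comp_measurePreserving hπ₁).integrable_mul (hη.comp_measurePreserving hπ₂)
  rw [integral_prod _ hint]
  congr 1 with x
  rw [sq]
  exact integral_prod_mul (fun z => η (x, z)) (fun z => η (x, z))

end Product

section Independence

variable {Ω α β : Type*} [MeasurableSpace Ω] [MeasurableSpace α] [MeasurableSpace β]
  {μ : Measure Ω} [IsFiniteMeasure μ] {X : Ω → α} {Z : Ω → β}

lemma ProbabilityTheory.IndepFun.integral_comp_prodMk {E : Type*} [NormedAddCommGroup E]
    [NormedSpace ℝ E] (hXZ : IndepFun X Z μ) (hX : AEMeasurable X μ) (hZ : AEMeasurable Z μ)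
    {f : α × β → E} (hf : AEStronglyMeasurable f ((μ.map X).prod (μ.map Z))) :
    ∫ ω, f (X ω, Z ω) ∂μ = ∫ p, f p ∂(μ.map X).prod (μ.map Z) := by
  rw [← hXZ.map_prod_eq_prod_map_map hX hZ] at hf ⊢
  exact (integral_map (hX.prodMk hZ) hf).symm

lemma ProbabilityTheory.IndepFun.condExp_comp_prodMk_ae_eq (hXZ : IndepFun X Z μ)
    (hX : Measurable X) (hZ : Measurable Z) {η : α × β → ℝ} (hη : Measurable η)
    (hint : Integrable η ((μ.map X).prod (μ.map Z))) :
    μ[fun ω => η (X ω, Z ω) | MeasurableSpace.comap X inferInstance]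
      =ᵐ[μ] fun ω => ∫ z, η (X ω, z) ∂μ.map Z := by
  set m : α → ℝ := fun x => ∫ z, η (x, z) ∂μ.map Z
  have hm : StronglyMeasurable m := hη.stronglyMeasurable.integral_prod_right'
  have hlaw := hXZ.map_prod_eq_prod_map_map hX.aemeasurable hZ.aemeasurable
  have hY : Integrable (fun ω => η (X ω, Z ω)) μ :=
    (hlaw ▸ hint).comp_measurable (hX.prodMk hZ)
  have hmX : Integrable (fun ω => m (X ω)) μ :=
    hint.integral_prod_left.comp_measurable hX
  refine (ae_eq_condExp_of_forall_setIntegral_eq hX.comap_le hY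
    (fun _ _ _ => hmX.integrableOn) (fun s hs _ => ?_)
    (hm.comp_measurable (comap_measurable X)).aestronglyMeasurable).symm
  obtain ⟨A, hA, rfl⟩ := hs
  calc ∫ ω in X ⁻¹' A, m (X ω) ∂μ
      = ∫ x in A, m x ∂μ.map X :=
        (setIntegral_map hA hm.aestronglyMeasurable hX.aemeasurable).symm
    _ = ∫ p in A ×ˢ Set.univ, η p ∂(μ.map X).prod (μ.map Z) := by
        rw [setIntegral_prod _ hint.integrableOn, Measure.restrict_univ]
    _ = ∫ ω in X ⁻¹' A, η (X ω, Z ω) ∂μ := by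
        rw [← hlaw, setIntegral_map (hA.prod .univ) hη.aestronglyMeasurable
          (hX.prodMk hZ).aemeasurable, Set.mk_preimage_prod, Set.preimage_univ, Set.inter_univ]

end Independence

theorem stmt1 {Ω α β : Type*} [MeasurableSpace Ω] [MeasurableSpace α] [MeasurableSpace β]
    {μ : Measure Ω} [IsProbabilityMeasure μ]
    {X : Ω → α} {Z Z' : Ω → β} (hX : Measurable X) (hZ : Measurable Z) (hZ' : Measurable Z')
    (hind : IndepFun X (fun ω => (Z ω, Z' ω)) μ) (hZZ' : IndepFun Z Z' μ)
    (hid : IdentDistrib Z' Z μ μ)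
    {η : α × β → ℝ} (hη : Measurable η)
    (hY2 : MemLp (fun ω => η (X ω, Z ω)) 2 μ) :
    (∫ ω, η (X ω, Z ω) * η (X ω, Z' ω) ∂μ)
      - (∫ ω, η (X ω, Z ω) ∂μ) * (∫ ω, η (X ω, Z' ω) ∂μ)
    = variance (μ[(fun ω => η (X ω, Z ω)) | MeasurableSpace.comap X inferInstance]) μ := by
  have : IsProbabilityMeasure (μ.map X) := Measure.isProbabilityMeasure_map hX.aemeasurable
  have : IsProbabilityMeasure (μ.map Z) := Measure.isProbabilityMeasure_map hZ.aemeasurable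
  have hXZ : IndepFun X Z μ := hind.comp measurable_id measurable_fst
  have hXZ' : IndepFun X Z' μ := hind.comp measurable_id measurable_snd
  have hZ'Z : μ.map Z' = μ.map Z := hid.map_eq
  have hlawZZ' : μ.map (fun ω => (Z ω, Z' ω)) = (μ.map Z).prod (μ.map Z) := by
    rw [hZZ'.map_prod_eq_prod_map_map hZ.aemeasurable hZ'.aemeasurable, hZ'Z]
  have hη2 : MemLp η 2 ((μ.map X).prod (μ.map Z)) := by
    rw [← hXZ.map_prod_eq_prod_map_map hX.aemeasurable hZ.aemeasurable]
    exact (memLp_map_measure_iff hη.aestronglyMeasurable (hX.prodMk hZ).aemeasurable).2 hY2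
  have hη1 : Integrable η ((μ.map X).prod (μ.map Z)) := hη2.integrable one_le_two
  set m : α → ℝ := fun x => ∫ z, η (x, z) ∂μ.map Z
  have hmean : ∫ ω, η (X ω, Z ω) ∂μ = ∫ x, m x ∂μ.map X := by
    rw [hXZ.integral_comp_prodMk hX.aemeasurable hZ.aemeasurable hη.aestronglyMeasurable,
      integral_prod _ hη1]
  have hmean' : ∫ ω, η (X ω, Z' ω) ∂μ = ∫ x, m x ∂μ.map X := by
    rw [hXZ'.integral_comp_prodMk hX.aemeasurable hZ'.aemeasurable
        (hZ'Z ▸ hη.aestronglyMeasurable),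
      hZ'Z, integral_prod _ hη1]
  have hcross : ∫ ω, η (X ω, Z ω) * η (X ω, Z' ω) ∂μ = ∫ x, m x ^ 2 ∂μ.map X := by
    rw [hind.integral_comp_prodMk (f := fun p => η (p.1, p.2.1) * η (p.1, p.2.2))
      hX.aemeasurable (hZ.prodMk hZ').aemeasurable (by fun_prop), hlawZZ']
    exact integral_prod_prod_mul_eq_integral_sq hη2
  have hcond : μ[fun ω => η (X ω, Z ω) | MeasurableSpace.comap X inferInstance]
      =ᵐ[μ] fun ω => m (X ω) :=
    hXZ.condExp_comp_prodMk_ae_eq hX hZ hη hη1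
  have hvar :
      Var[fun ω => m (X ω); μ] = ∫ x, m x ^ 2 ∂μ.map X - (∫ x, m x ∂μ.map X) ^ 2 := by
    rw [MeasurePreserving.variance_fun_comp ⟨hX, rfl⟩
        hη.stronglyMeasurable.integral_prod_right'.measurable.aemeasurable,
      variance_eq_sub (memLp_two_integral_prod_left hη2)]
    rfl
  rw [variance_congr hcond, hvar, hmean, hmean', hcross]
  ring
end

section
/- The pick-freeze estimator T_N^η = [ (1/N)Σ Y_i Y_i' − ((1/N)Σ (Y_i+Y_i')/2)^2 ] / [ (1/N)Σ (Y_i^2+(Y_i')^2)/2 − ((1/N)Σ (Y_i+Y_i')/2)^2 ] converges almost surely to S as N → ∞. -/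
open MeasureTheory ProbabilityTheory Filter
open scoped Topology

/-!
By the freezing lemma, `E[Y | X] = g(X)` with `g x = ∫ η(x, z) dP_Z(z)`. Since `Z, Z'` are i.i.d.
and independent of `X`, the same lemma applied to `(Z, Z')` gives `E[Y Y' | X] = g(X)²`, hence
`Var E[Y | X] = E[Y Y'] - E[Y]² = Cov(Y, Y')`. As `Y'` has the law of `Y`, the symmetrised empirical
means in the estimator converge by the strong law of large numbers to `E[Y]`, `E[Y²]` and
`E[Y Y']`, so the estimator converges to `Cov(Y, Y') / Var(Y)`.
-/

section Freezing

variable {Ω α β E : Type*} [MeasurableSpace Ω] [mα : MeasurableSpace α] [MeasurableSpace β]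
  [NormedAddCommGroup E] [NormedSpace ℝ E] [CompleteSpace E]
  {μ : Measure Ω} [IsFiniteMeasure μ] {X : Ω → α} {Z : Ω → β}

theorem condExp_comap_ae_eq_integral_of_indepFun (hX : Measurable X) (hZ : Measurable Z)
    (hXZ : IndepFun X Z μ) {η : α × β → E} (hη : StronglyMeasurable η)
    (hint : Integrable (fun ω => η (X ω, Z ω)) μ) :
    μ[fun ω => η (X ω, Z ω) | mα.comap X] =ᵐ[μ] fun ω => ∫ z, η (X ω, z) ∂(μ.map Z) := by
  have hlaw : μ.map (fun ω => (X ω, Z ω)) = (μ.map X).prod (μ.map Z) :=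
    hXZ.map_prod_eq_prod_map_map hX.aemeasurable hZ.aemeasurable
  have hη_int : Integrable η ((μ.map X).prod (μ.map Z)) := by
    rw [← hlaw]
    exact (integrable_map_measure hη.aestronglyMeasurable (hX.prodMk hZ).aemeasurable).2 hint
  have hg : StronglyMeasurable fun x => ∫ z, η (x, z) ∂(μ.map Z) :=
    hη.integral_prod_right'
  refine (ae_eq_condExp_of_forall_setIntegral_eq hX.comap_le hint (fun s _ _ => ?_)
    ?_ ?_).symm
  · exact ((integrable_map_measure hg.aestronglyMeasurable hX.aemeasurable).1
      hη_int.integral_prod_left).integrableOn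
  · rintro s ⟨B, hB, rfl⟩ -
    have hpre : (fun ω => (X ω, Z ω)) ⁻¹' (B ×ˢ Set.univ) = X ⁻¹' B := by ext; simp
    rw [← setIntegral_map hB hg.aestronglyMeasurable hX.aemeasurable, ← hpre,
      ← setIntegral_map (hB.prod MeasurableSet.univ) (hlaw ▸ hη.aestronglyMeasurable)
        (hX.prodMk hZ).aemeasurable, hlaw, setIntegral_prod _ hη_int.integrableOn,
      Measure.restrict_univ]
  · exact (hg.comp_measurable (comap_measurable X)).aestronglyMeasurable

theorem integral_mul_eq_integral_condExp_sq {Z' : Ω → β} (hX : Measurable X) (hZ : Measurable Z)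
    (hZ' : Measurable Z') (hind : IndepFun X (fun ω => (Z ω, Z' ω)) μ) (hZZ' : IndepFun Z Z' μ)
    (hid : IdentDistrib Z' Z μ μ) {η : α × β → ℝ} (hη : Measurable η)
    (hY : Integrable (fun ω => η (X ω, Z ω)) μ)
    (hYY' : Integrable (fun ω => η (X ω, Z ω) * η (X ω, Z' ω)) μ) :
    ∫ ω, η (X ω, Z ω) * η (X ω, Z' ω) ∂μ
      = ∫ ω, (μ[fun ω => η (X ω, Z ω) | mα.comap X]) ω ^ 2 ∂μ := by
  have hlaw : μ.map (fun ω => (Z ω, Z' ω)) = (μ.map Z).prod (μ.map Z) := by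
    rw [hZZ'.map_prod_eq_prod_map_map hZ.aemeasurable hZ'.aemeasurable, hid.map_eq]
  have hprod := condExp_comap_ae_eq_integral_of_indepFun hX (hZ.prodMk hZ') hind
    (η := fun p => η (p.1, p.2.1) * η (p.1, p.2.2)) (by fun_prop : Measurable _).stronglyMeasurable
    hYY'
  have hsingle := condExp_comap_ae_eq_integral_of_indepFun hX hZ
    (hind.comp measurable_id measurable_fst) hη.stronglyMeasurable hY
  calc ∫ ω, η (X ω, Z ω) * η (X ω, Z' ω) ∂μ
      = ∫ ω, (μ[fun ω => η (X ω, Z ω) * η (X ω, Z' ω) | mα.comap X]) ω ∂μ :=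
        (integral_condExp hX.comap_le).symm
    _ = ∫ ω, (∫ z, η (X ω, z) ∂(μ.map Z)) ^ 2 ∂μ := by
        refine integral_congr_ae (hprod.mono fun ω hω => ?_)
        dsimp only at hω ⊢
        rw [hω, hlaw, integral_prod_mul (fun z => η (X ω, z)) (fun z => η (X ω, z)), sq]
    _ = ∫ ω, (μ[fun ω => η (X ω, Z ω) | mα.comap X]) ω ^ 2 ∂μ :=
        integral_congr_ae (hsingle.mono fun ω hω => by simp only [hω])

end Freezing

theorem identDistrib_pickFreeze {Ω α β : Type*} [MeasurableSpace Ω] [MeasurableSpace α]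
    [MeasurableSpace β] {μ : Measure Ω} [IsFiniteMeasure μ] {X : Ω → α} {Z Z' : Ω → β}
    (hX : Measurable X) (hind : IndepFun X (fun ω => (Z ω, Z' ω)) μ)
    (hid : IdentDistrib Z' Z μ μ) {η : α × β → ℝ} (hη : Measurable η) :
    IdentDistrib (fun ω => η (X ω, Z' ω)) (fun ω => η (X ω, Z ω)) μ μ :=
  ((IdentDistrib.refl hX.aemeasurable).prodMk hid (hind.comp measurable_id measurable_snd)
    (hind.comp measurable_id measurable_fst)).comp hη

theorem variance_condExp_comap_eq_covariance {Ω α β : Type*} [MeasurableSpace Ω]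
    [mα : MeasurableSpace α] [MeasurableSpace β] {μ : Measure Ω} [IsProbabilityMeasure μ]
    {X : Ω → α} {Z Z' : Ω → β} (hX : Measurable X) (hZ : Measurable Z) (hZ' : Measurable Z')
    (hind : IndepFun X (fun ω => (Z ω, Z' ω)) μ) (hZZ' : IndepFun Z Z' μ)
    (hid : IdentDistrib Z' Z μ μ) {η : α × β → ℝ} (hη : Measurable η)
    (hY : MemLp (fun ω => η (X ω, Z ω)) 2 μ) :
    variance (μ[fun ω => η (X ω, Z ω) | mα.comap X]) μ
      = cov[fun ω => η (X ω, Z ω), fun ω => η (X ω, Z' ω); μ] := by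
  have hY'Y := identDistrib_pickFreeze hX hind hid hη
  have hY' : MemLp (fun ω => η (X ω, Z' ω)) 2 μ := hY'Y.symm.memLp_snd hY
  rw [variance_eq_sub (hY.condExp one_le_two), covariance_eq_sub hY hY',
    integral_condExp hX.comap_le, hY'Y.integral_eq]
  simp only [Pi.pow_apply, Pi.mul_apply]
  rw [integral_mul_eq_integral_condExp_sq hX hZ hZ' hind hZZ' hid hη (hY.integrable one_le_two)
    (hY.integrable_mul hY'), sq]

theorem strong_law_ae_real_comp {Ω E : Type*} [MeasurableSpace Ω] [MeasurableSpace E]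
    {μ : Measure Ω} {W : ℕ → Ω → E} {V : Ω → E} (hindep : iIndepFun W μ)
    (hid : ∀ i, IdentDistrib (W i) V μ μ) {φ : E → ℝ} (hφ : Measurable φ)
    (hint : Integrable (fun ω => φ (V ω)) μ) :
    ∀ᵐ ω ∂μ, Tendsto (fun n : ℕ => (n : ℝ)⁻¹ * ∑ i ∈ Finset.range n, φ (W i ω)) atTop
      (𝓝 (∫ ω, φ (V ω) ∂μ)) := by
  have hφW : ∀ i, IdentDistrib (fun ω => φ (W i ω)) (fun ω => φ (V ω)) μ μ :=
    fun i => (hid i).comp hφ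
  have h := strong_law_ae_real (fun i ω => φ (W i ω)) ((hφW 0).integrable_iff.2 hint)
    (fun i j hij => (hindep.indepFun hij).comp hφ hφ) (fun i => (hφW i).trans (hφW 0).symm)
  rw [(hφW 0).integral_eq] at h
  simpa only [inv_mul_eq_div] using h

theorem ProbabilityTheory.IdentDistrib.integral_add_div_two {Ω : Type*} [MeasurableSpace Ω]
    {μ : Measure Ω} {Y Y' : Ω → ℝ} (h : IdentDistrib Y' Y μ μ) (hY : Integrable Y μ) :
    ∫ ω, (Y ω + Y' ω) / 2 ∂μ = ∫ ω, Y ω ∂μ := by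
  rw [integral_div, integral_add hY (h.integrable_iff.2 hY), h.integral_eq]
  ring

noncomputable def pickFreezeEstimator (w : ℕ → ℝ × ℝ) (N : ℕ) : ℝ :=
  ((N : ℝ)⁻¹ * ∑ i ∈ Finset.range N, (w i).1 * (w i).2
      - ((N : ℝ)⁻¹ * ∑ i ∈ Finset.range N, ((w i).1 + (w i).2) / 2) ^ 2)
    / ((N : ℝ)⁻¹ * ∑ i ∈ Finset.range N, ((w i).1 ^ 2 + (w i).2 ^ 2) / 2
      - ((N : ℝ)⁻¹ * ∑ i ∈ Finset.range N, ((w i).1 + (w i).2) / 2) ^ 2)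

theorem ae_tendsto_pickFreezeEstimator {Ω : Type*} [MeasurableSpace Ω] {μ : Measure Ω}
    [IsProbabilityMeasure μ] {Y Y' : Ω → ℝ} (hY : MemLp Y 2 μ) (hY'Y : IdentDistrib Y' Y μ μ)
    (hvar : variance Y μ ≠ 0) {W : ℕ → Ω → ℝ × ℝ} (hWindep : iIndepFun W μ)
    (hWid : ∀ i, IdentDistrib (W i) (fun ω => (Y ω, Y' ω)) μ μ) :
    ∀ᵐ ω ∂μ, Tendsto (pickFreezeEstimator fun i => W i ω) atTop
      (𝓝 (cov[Y, Y'; μ] / variance Y μ)) := by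
  have hY' : MemLp Y' 2 μ := hY'Y.symm.memLp_snd hY
  have hmeanY : ∫ ω, (Y ω + Y' ω) / 2 ∂μ = ∫ ω, Y ω ∂μ :=
    hY'Y.integral_add_div_two (hY.integrable one_le_two)
  have hsqY : ∫ ω, (Y ω ^ 2 + Y' ω ^ 2) / 2 ∂μ = ∫ ω, Y ω ^ 2 ∂μ :=
    (hY'Y.comp (measurable_id.pow_const 2)).integral_add_div_two hY.integrable_sq
  rw [variance_eq_sub hY] at hvar ⊢
  rw [covariance_eq_sub hY hY', hY'Y.integral_eq, ← sq]
  simp only [Pi.pow_apply, Pi.mul_apply] at hvar ⊢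
  -- express the limit through the three symmetrised means the estimator is built from
  rw [← hsqY, ← hmeanY] at hvar ⊢
  have hmean := strong_law_ae_real_comp hWindep hWid (φ := fun p => (p.1 + p.2) / 2)
    (by fun_prop) (((hY.integrable one_le_two).add (hY'.integrable one_le_two)).div_const 2)
  have hcross := strong_law_ae_real_comp hWindep hWid (φ := fun p => p.1 * p.2)
    (by fun_prop) (hY.integrable_mul hY')
  have hsq := strong_law_ae_real_comp hWindep hWid (φ := fun p => (p.1 ^ 2 + p.2 ^ 2) / 2)
    (by fun_prop) ((hY.integrable_sq.add hY'.integrable_sq).div_const 2)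
  filter_upwards [hmean, hcross, hsq] with ω hmean hcross hsq
  exact (hcross.sub (hmean.pow 2)).div (hsq.sub (hmean.pow 2)) hvar

theorem stmt7_general {Ω α β : Type*} [MeasurableSpace Ω] [MeasurableSpace α] [MeasurableSpace β]
    {μ : Measure Ω} [IsProbabilityMeasure μ]
    {X : Ω → α} {Z Z' : Ω → β} (hX : Measurable X) (hZ : Measurable Z) (hZ' : Measurable Z')
    (hind : IndepFun X (fun ω => (Z ω, Z' ω)) μ) (hZZ' : IndepFun Z Z' μ)
    (hid : IdentDistrib Z' Z μ μ)
    {η : α × β → ℝ} (hη : Measurable η)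
    (hY4 : MemLp (fun ω => η (X ω, Z ω)) 4 μ)
    (hvar : 0 < variance (fun ω => η (X ω, Z ω)) μ)
    {W : ℕ → Ω → ℝ × ℝ}
    (hWindep : iIndepFun W μ)
    (hWid : ∀ i, IdentDistrib (W i) (fun ω => (η (X ω, Z ω), η (X ω, Z' ω))) μ μ) :
    ∀ᵐ ω ∂μ, Tendsto (fun N : ℕ =>
      ((N : ℝ)⁻¹ * ∑ i ∈ Finset.range N, (W i ω).1 * (W i ω).2
        - ((N : ℝ)⁻¹ * ∑ i ∈ Finset.range N, ((W i ω).1 + (W i ω).2) / 2) ^ 2)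
      / ((N : ℝ)⁻¹ * ∑ i ∈ Finset.range N, (((W i ω).1) ^ 2 + ((W i ω).2) ^ 2) / 2
        - ((N : ℝ)⁻¹ * ∑ i ∈ Finset.range N, ((W i ω).1 + (W i ω).2) / 2) ^ 2))
      atTop
      (𝓝 (variance (μ[(fun ω => η (X ω, Z ω)) | MeasurableSpace.comap X inferInstance]) μ
            / variance (fun ω => η (X ω, Z ω)) μ)) := by
  have hY : MemLp (fun ω => η (X ω, Z ω)) 2 μ := hY4.mono_exponent (by norm_num)
  rw [variance_condExp_comap_eq_covariance hX hZ hZ' hind hZZ' hid hη hY]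
  exact ae_tendsto_pickFreezeEstimator hY (identDistrib_pickFreeze hX hind hid hη) hvar.ne'
    hWindep hWid

theorem stmt7 {Ω α β : Type*} [MeasurableSpace Ω] [MeasurableSpace α] [MeasurableSpace β]
    {μ : Measure Ω} [IsProbabilityMeasure μ]
    {X : Ω → α} {Z Z' : Ω → β} (hX : Measurable X) (hZ : Measurable Z) (hZ' : Measurable Z')
    (hind : IndepFun X (fun ω => (Z ω, Z' ω)) μ) (hZZ' : IndepFun Z Z' μ)
    (hid : IdentDistrib Z' Z μ μ)
    {η : α × β → ℝ} (hη : Measurable η)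
    (hY4 : MemLp (fun ω => η (X ω, Z ω)) 4 μ)
    (hvar : 0 < variance (fun ω => η (X ω, Z ω)) μ)
    {W : ℕ → Ω → ℝ × ℝ} (hWmeas : ∀ i, Measurable (W i))
    (hWindep : iIndepFun W μ)
    (hWid : ∀ i, IdentDistrib (W i) (fun ω => (η (X ω, Z ω), η (X ω, Z' ω))) μ μ) :
    ∀ᵐ ω ∂μ, Tendsto (fun N : ℕ =>
      ((N : ℝ)⁻¹ * ∑ i ∈ Finset.range N, (W i ω).1 * (W i ω).2
        - ((N : ℝ)⁻¹ * ∑ i ∈ Finset.range N, ((W i ω).1 + (W i ω).2) / 2) ^ 2)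
      / ((N : ℝ)⁻¹ * ∑ i ∈ Finset.range N, (((W i ω).1) ^ 2 + ((W i ω).2) ^ 2) / 2
        - ((N : ℝ)⁻¹ * ∑ i ∈ Finset.range N, ((W i ω).1 + (W i ω).2) / 2) ^ 2))
      atTop
      (𝓝 (variance (μ[(fun ω => η (X ω, Z ω)) | MeasurableSpace.comap X inferInstance]) μ
            / variance (fun ω => η (X ω, Z ω)) μ)) :=
  stmt7_general hX hZ hZ' hind hZZ' hid hη hY4 hvar hWindep hWid
end
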